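/- arXiv:math/0105066 — 3 statements merged into one kernel-verified Lean document; each statement's English description precedes it below -/
import Mathlib

section
/- Let d ≥ 2, let ω ∈ KT_d and let T ∈ GL(d,ℤ) have simple eigenvalues λ₁, …, λ_d with 0 < |λ_d| ≤ ⋯ ≤ |λ₂| < 1 < |λ₁| and Tω = λ₁ω. Set β = −1 − ln|λ₁|/ln|λ₂|. Then ω is diophantine with exponent β: there exists a constant C > 0 such that |ω·k| > C·‖k‖^{−β−1} for every nonzero integer vector k ∈ ℤ^d, where ‖·‖ is the ℓ¹-norm. -/
open scoped BigOperators ENNReal Classical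
open Complex

noncomputable section

namespace Renorm

/-- ℓ¹ norm of an integer frequency vector. -/
def nZ {d : ℕ} (k : Fin d → ℤ) : ℝ := ∑ i, |(k i : ℝ)|

/-- `ℂ^m` with the ℓ¹ norm. -/
abbrev V (m : ℕ) : Type := PiLp 1 (fun _ : Fin m => ℂ)

/-- The Banach space underlying `𝒜_d(r)` (and `𝒜'_d(r)`):  an element stores, at
index `k ∈ ℤ^d`, the Fourier coefficient multiplied by the corresponding weight,
so that the `lp`-norm coincides with the norm `‖·‖_r` (resp. `‖·‖'_r`). -/
abbrev AA (d m : ℕ) : Type := lp (fun _ : (Fin d → ℤ) => V m) 1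

/-- weight of the norm of `𝒜_d(r)` -/
def w {d : ℕ} (r : ℝ) (k : Fin d → ℤ) : ℝ := Real.exp (r * nZ k)

/-- weight of the norm of `𝒜'_d(r)` -/
def w' {d : ℕ} (r : ℝ) (k : Fin d → ℤ) : ℝ := (1 + 2 * Real.pi * nZ k) * Real.exp (r * nZ k)

/-- Fourier coefficient of `a` regarded as an element of `𝒜_d(r)`. -/
def coeffA {d m : ℕ} (r : ℝ) (a : AA d m) (k : Fin d → ℤ) : V m := (w r k)⁻¹ • a k

/-- Fourier coefficient of `a` regarded as an element of `𝒜'_d(r)`. -/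
def coeffA' {d m : ℕ} (r : ℝ) (a : AA d m) (k : Fin d → ℤ) : V m := (w' r k)⁻¹ • a k

/-- `k · θ` -/
def kdot {d : ℕ} (k : Fin d → ℤ) (θ : V d) : ℂ := ∑ i, (k i : ℂ) * θ i

/-- the Fourier character `e^{2πi k·θ}` -/
def e2 {d : ℕ} (k : Fin d → ℤ) (θ : V d) : ℂ := Complex.exp (2 * Real.pi * Complex.I * kdot k θ)

/-- the function represented by `a`, regarded as an element of `𝒜_d(r)` -/
def funA {d m : ℕ} (r : ℝ) (a : AA d m) (θ : V d) : V m := ∑' k, e2 k θ • coeffA r a k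

/-- the function represented by `a`, regarded as an element of `𝒜'_d(r)` -/
def funA' {d m : ℕ} (r : ℝ) (a : AA d m) (θ : V d) : V m := ∑' k, e2 k θ • coeffA' r a k

/-- the complex domain `D(r)` -/
def Dom (d : ℕ) (r : ℝ) : Set (V d) := {θ | (∑ i, |(θ i).im|) < r / (2 * Real.pi)}

/-- the norm `‖·‖_s` of a family of Fourier coefficients -/
def normA {d m : ℕ} (s : ℝ) (c : (Fin d → ℤ) → V m) : ℝ := ∑' k, ‖c k‖ * w s k

/-- the norm `‖·‖'_s` of a family of Fourier coefficients -/
def normA' {d m : ℕ} (s : ℝ) (c : (Fin d → ℤ) → V m) : ℝ := ∑' k, ‖c k‖ * w' s k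

/-- the set `I_σ⁻(ω)` of far from resonance indices -/
def Iminus {d : ℕ} (σ : ℝ) (ω : V d) : Set (Fin d → ℤ) :=
  {k | σ * nZ k < ‖∑ i, ω i * (k i : ℂ)‖}

/-- the constant vector field `c` as an element of `𝒜_d(r)` / `𝒜'_d(r)`
(both weights are `1` at `k = 0`). -/
def const {d m : ℕ} (c : V m) : AA d m := lp.single 1 (0 : Fin d → ℤ) c

/-- the subspace of `𝒜_d` / `𝒜'_d` of vector fields with Fourier modes supported in `S` -/
def SubOn (d m : ℕ) (S : Set (Fin d → ℤ)) : Submodule ℂ (AA d m) where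
  carrier := {a | ∀ k ∉ S, a k = 0}
  add_mem' := by
    intro a b ha hb k hk
    rw [lp.coeFn_add, Pi.add_apply, ha k hk, hb k hk, add_zero]
  zero_mem' := by
    intro k _
    rw [lp.coeFn_zero, Pi.zero_apply]
  smul_mem' := by
    intro c a ha k hk
    rw [lp.coeFn_smul, Pi.smul_apply, ha k hk, smul_zero]

/-- real vector as a complex one -/
def toC {d : ℕ} (ω : Fin d → ℝ) : V d := WithLp.toLp 1 (fun i => (ω i : ℂ))


/-- Koch type vectors `KT_d`: `ω = c·(1, ω₂, …, ω_d)` with `c ≠ 0`, the `ωᵢ`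
real algebraic numbers and `ℚ(ω₂,…,ω_d)` of degree `d` over `ℚ`. -/
def KochType (d : ℕ) (ω : Fin d → ℝ) : Prop :=
  ∃ (c : ℝ) (ω0 : Fin d → ℝ), c ≠ 0 ∧ ω = c • ω0 ∧ (∀ h0 : 0 < d, ω0 ⟨0, h0⟩ = 1) ∧
    (∀ i, IsAlgebraic ℚ (ω0 i)) ∧
    Module.finrank ℚ (IntermediateField.adjoin ℚ (Set.range ω0) : IntermediateField ℚ ℝ) = d

/-!
The left eigenvectors `v_j` of `T` (`v_j T = λ_j v_j`) form a basis of `ℂ^d`, and for `j ≠ 1` they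
are orthogonal to the right eigenvector `ω`. So the `v₁`-coordinate of `k` is a fixed multiple of
`ω·k`, and `‖k Tⁿ‖ ≤ a |λ₁|ⁿ |ω·k| + B |λ₂|ⁿ ‖k‖`. On the other hand `k Tⁿ` is a nonzero integer
vector, so `‖k Tⁿ‖ ≥ 1`. Choosing `n` with `|λ₂|ⁿ ≈ 1/‖k‖` makes the second term small and leaves
`|ω·k| ≳ |λ₁|⁻ⁿ ≈ ‖k‖^(ln|λ₁|/ln|λ₂|)`.
-/

end Renorm

open Matrix Polynomial Module

lemma Module.End.exists_basis_hasEigenvector_of_charpoly_eq_prod {K V ι : Type*} [Field K]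
    [AddCommGroup V] [Module K V] [FiniteDimensional K V] [Fintype ι] {f : End K V}
    {lam : ι → K} (hf : f.charpoly = ∏ j, (X - C (lam j))) (hlam : Function.Injective lam) :
    ∃ b : Basis ι K V, ∀ j, f.HasEigenvector (lam j) (b j) := by
  have hroot : ∀ j, f.HasEigenvalue (lam j) := fun j => by
    rw [End.hasEigenvalue_iff_isRoot_charpoly, hf, IsRoot, eval_prod]
    exact Finset.prod_eq_zero (Finset.mem_univ j) (by simp)
  choose v hv using fun j => (hroot j).exists_hasEigenvector
  have hcard : Fintype.card ι = finrank K V := by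
    rw [← f.charpoly_natDegree, hf, natDegree_finsetProd_X_sub_C_eq_card, Finset.card_univ]
  refine ⟨basisOfLinearIndependentOfCardEqFinrank' v
    (End.eigenvectors_linearIndependent' f lam hlam v hv) hcard, fun j => ?_⟩
  simpa using hv j

lemma Module.End.pow_apply_eq_sum_repr {R M ι : Type*} [CommRing R] [AddCommGroup M]
    [Module R M] [Fintype ι] {f : End R M} (b : Basis ι R M) {lam : ι → R}
    (hb : ∀ j, f.HasEigenvector (lam j) (b j)) (x : M) (m : ℕ) :
    (f ^ m) x = ∑ j, (b.repr x j * lam j ^ m) • b j := by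
  conv_lhs => rw [← b.sum_repr x]
  simp only [map_sum, map_smul, (hb _).pow_apply, smul_smul, mul_comm]

lemma Module.End.exists_norm_pow_apply_le {𝕜 E ι : Type*} [NontriviallyNormedField 𝕜]
    [CompleteSpace 𝕜] [NormedAddCommGroup E] [NormedSpace 𝕜 E] [FiniteDimensional 𝕜 E]
    [Fintype ι] [DecidableEq ι] {f : End 𝕜 E} (b : Basis ι 𝕜 E) {lam : ι → 𝕜}
    (hb : ∀ j, f.HasEigenvector (lam j) (b j)) {i₀ : ι} {ρ : ℝ} (hρ : ∀ j ≠ i₀, ‖lam j‖ ≤ ρ) :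
    ∃ B ≥ 0, ∀ (x : E) (m : ℕ),
      ‖(f ^ m) x‖ ≤ ‖b.repr x i₀‖ * ‖lam i₀‖ ^ m * ‖b i₀‖ + B * ρ ^ m * ‖x‖ := by
  let c : ι → ℝ := fun j => ‖LinearMap.toContinuousLinearMap (b.coord j)‖ * ‖b j‖
  refine ⟨∑ j ∈ Finset.univ.erase i₀, c j, by positivity, fun x m => ?_⟩
  have hterm : ∀ j ∈ Finset.univ.erase i₀,
      ‖b.repr x j‖ * ‖lam j‖ ^ m * ‖b j‖ ≤ c j * ρ ^ m * ‖x‖ := fun j hj => by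
    have hrepr : ‖b.repr x j‖ ≤ ‖LinearMap.toContinuousLinearMap (b.coord j)‖ * ‖x‖ :=
      (LinearMap.toContinuousLinearMap (b.coord j)).le_opNorm x
    have hpow : ‖lam j‖ ^ m ≤ ρ ^ m :=
      pow_le_pow_left₀ (norm_nonneg _) (hρ j (Finset.ne_of_mem_erase hj)) m
    calc ‖b.repr x j‖ * ‖lam j‖ ^ m * ‖b j‖
        ≤ (‖LinearMap.toContinuousLinearMap (b.coord j)‖ * ‖x‖) * ρ ^ m * ‖b j‖ := by gcongr
      _ = c j * ρ ^ m * ‖x‖ := by ring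
  calc ‖(f ^ m) x‖ ≤ ∑ j, ‖b.repr x j‖ * ‖lam j‖ ^ m * ‖b j‖ := by
        rw [End.pow_apply_eq_sum_repr b hb]
        refine (norm_sum_le _ _).trans_eq (Finset.sum_congr rfl fun j _ => ?_)
        rw [norm_smul, norm_mul, norm_pow]
    _ = ‖b.repr x i₀‖ * ‖lam i₀‖ ^ m * ‖b i₀‖
          + ∑ j ∈ Finset.univ.erase i₀, ‖b.repr x j‖ * ‖lam j‖ ^ m * ‖b j‖ :=
        (Finset.add_sum_erase _ _ (Finset.mem_univ i₀)).symm
    _ ≤ _ := by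
        rw [Finset.sum_mul, Finset.sum_mul]
        exact add_le_add_right (Finset.sum_le_sum hterm) _

lemma Matrix.charpoly_vecMulLinear {K n : Type*} [Field K] [Fintype n] [DecidableEq n]
    (A : Matrix n n K) : A.vecMulLinear.charpoly = A.charpoly := by
  rw [← mulVecLin_transpose, charpoly_mulVecLin, charpoly_transpose]

lemma Matrix.vecMulLinear_pow_apply {R n : Type*} [CommSemiring R] [Fintype n] [DecidableEq n]
    (A : Matrix n n R) (x : n → R) (m : ℕ) : (A.vecMulLinear ^ m) x = x ᵥ* A ^ m := by
  induction m generalizing x with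
  | zero => simp
  | succ m ih =>
    rw [pow_succ, End.mul_apply, ih, vecMulLinear_apply, vecMul_vecMul, pow_succ']

lemma Matrix.dotProduct_eq_zero_of_vecMul_eq_smul_of_mulVec_eq_smul {K n : Type*} [Field K]
    [Fintype n] {A : Matrix n n K} {u v : n → K} {μ ν : K} (hv : v ᵥ* A = ν • v)
    (hu : A *ᵥ u = μ • u) (hne : ν ≠ μ) : v ⬝ᵥ u = 0 := by
  have h := dotProduct_mulVec v A u
  rw [hu, hv, dotProduct_smul, smul_dotProduct, smul_eq_mul, smul_eq_mul] at h
  exact (mul_eq_zero.1 (by linear_combination -h : (ν - μ) * (v ⬝ᵥ u) = 0)).resolve_left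
    (sub_ne_zero.2 hne)

lemma Module.Basis.dotProduct_eq_repr_mul {R n : Type*} [CommSemiring R] [Fintype n]
    (b : Basis n R (n → R)) {u : n → R} {i₀ : n} (h : ∀ j ≠ i₀, b j ⬝ᵥ u = 0) (x : n → R) :
    x ⬝ᵥ u = b.repr x i₀ * (b i₀ ⬝ᵥ u) := by
  conv_lhs => rw [← b.sum_repr x]
  rw [sum_dotProduct, Finset.sum_eq_single i₀ (fun j _ hj => by rw [smul_dotProduct, h j hj,
    smul_zero]) (by simp), smul_dotProduct, smul_eq_mul]

lemma Matrix.vecMul_pow_ne_zero {R n : Type*} [CommRing R] [IsDomain R] [Fintype n]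
    [DecidableEq n] {T : Matrix n n R} (hT : T.det ≠ 0) {k : n → R} (hk : k ≠ 0) (m : ℕ) :
    k ᵥ* T ^ m ≠ 0 := fun h => by
  have hdet := exists_vecMul_eq_zero_iff.1 ⟨k, hk, h⟩
  rw [det_pow] at hdet
  exact pow_ne_zero m hT hdet

lemma one_le_norm_intCast_of_ne_zero {n : Type*} [Fintype n] {k : n → ℤ} (hk : k ≠ 0) :
    1 ≤ ‖fun i => (k i : ℂ)‖ := by
  obtain ⟨i, hi⟩ := Function.ne_iff.1 hk
  calc (1 : ℝ) ≤ ‖(k i : ℂ)‖ := by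
        rw [Complex.norm_intCast, ← Int.cast_abs]
        exact_mod_cast Int.one_le_abs hi
    _ ≤ ‖fun i => (k i : ℂ)‖ := norm_le_pi_norm (fun i => (k i : ℂ)) i

lemma one_le_norm_intCast_vecMul_map_pow {n : Type*} [Fintype n] [DecidableEq n]
    {T : Matrix n n ℤ} (hT : T.det ≠ 0) {k : n → ℤ} (hk : k ≠ 0) (m : ℕ) :
    1 ≤ ‖(fun i => (k i : ℂ)) ᵥ* T.map ((↑) : ℤ → ℂ) ^ m‖ := by
  have hcast : (fun i => (k i : ℂ)) ᵥ* T.map ((↑) : ℤ → ℂ) ^ m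
      = fun i => ((k ᵥ* T ^ m) i : ℂ) := by
    ext i
    rw [show ((↑) : ℤ → ℂ) = Int.castRingHom ℂ from rfl, ← Matrix.map_pow]
    exact (RingHom.map_vecMul (Int.castRingHom ℂ) (T ^ m) k i).symm
  rw [hcast]
  exact one_le_norm_intCast_of_ne_zero (vecMul_pow_ne_zero hT hk m)

lemma exists_pos_forall_mul_rpow_lt_of_one_le_add_pow {L ρ a B : ℝ} (hL : 1 < L) (hρ₀ : 0 < ρ)
    (hρ₁ : ρ < 1) (ha : 0 < a) :
    ∃ C > 0, ∀ E N : ℝ, 1 ≤ N → (∀ n : ℕ, 1 ≤ a * L ^ n * E + B * ρ ^ n * N) →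
      C * N ^ (Real.log L / Real.log ρ) < E := by
  set γ := Real.log L / Real.log ρ
  set B' := max B 1
  have hγ : γ ≤ 0 := div_nonpos_of_nonneg_of_nonpos (Real.log_nonneg hL.le)
    (Real.log_nonpos hρ₀.le hρ₁.le)
  have hργ : ρ ^ γ = L := by
    rw [Real.rpow_def_of_pos hρ₀, mul_div_cancel₀ _ (Real.log_neg hρ₀ hρ₁).ne,
      Real.exp_log (by linarith)]
  refine ⟨(2 * B') ^ γ / (2 * a * L), by positivity, fun E N hN h => ?_⟩
  have hx : 1 ≤ 2 * B' * N := by nlinarith [le_max_right B 1]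
  obtain ⟨n, hn, hn1⟩ := exists_nat_pow_near hx (one_lt_inv₀ hρ₀ |>.2 hρ₁)
  have hsmall : B' * ρ ^ (n + 1) * N < 1 / 2 := by
    have h' := mul_lt_mul_of_pos_left hn1 (pow_pos hρ₀ (n + 1))
    rw [inv_pow, mul_inv_cancel₀ (by positivity)] at h'
    linarith
  have hlarge : ρ ≤ ρ ^ (n + 1) * (2 * B' * N) := by
    rw [inv_pow, inv_le_iff_one_le_mul₀' (by positivity)] at hn
    rw [pow_succ]
    nlinarith
  have hpow : L ^ (n + 1) * (2 * B' * N) ^ γ ≤ L := by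
    rw [← hργ, Real.rpow_pow_comm hρ₀.le, ← Real.mul_rpow (by positivity) (by positivity)]
    exact Real.rpow_le_rpow_of_nonpos hρ₀ hlarge hγ
  have hmain : 1 / 2 < a * L ^ (n + 1) * E := by
    have := h (n + 1)
    have : B * ρ ^ (n + 1) * N ≤ B' * ρ ^ (n + 1) * N := by gcongr; exact le_max_left B 1
    linarith
  have hE : 0 < E := pos_of_mul_pos_right (hmain.trans' one_half_pos) (by positivity)
  rw [div_mul_eq_mul_div, ← Real.mul_rpow (by positivity) (by linarith),
    div_lt_iff₀ (by positivity)]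
  calc (2 * B' * N) ^ γ < (2 * B' * N) ^ γ * (2 * (a * L ^ (n + 1) * E)) :=
        lt_mul_of_one_lt_right (by positivity) (by linarith)
    _ = 2 * a * E * (L ^ (n + 1) * (2 * B' * N) ^ γ) := by ring
    _ ≤ 2 * a * E * L := by gcongr
    _ = E * (2 * a * L) := by ring

lemma Matrix.exists_norm_vecMul_pow_le {𝕜 n : Type*} [NontriviallyNormedField 𝕜]
    [CompleteSpace 𝕜] [Fintype n] [DecidableEq n] {A : Matrix n n 𝕜} {lam : n → 𝕜}
    (hchar : A.charpoly = ∏ j, (X - C (lam j))) (hlam : Function.Injective lam) {i₀ : n}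
    {ω : n → 𝕜} (hω : ω ≠ 0) (hev : A *ᵥ ω = lam i₀ • ω) {ρ : ℝ}
    (hρ : ∀ j ≠ i₀, ‖lam j‖ ≤ ρ) :
    ∃ a > 0, ∃ B ≥ 0, ∀ (x : n → 𝕜) (m : ℕ),
      ‖x ᵥ* A ^ m‖ ≤ a * ‖lam i₀‖ ^ m * ‖x ⬝ᵥ ω‖ + B * ρ ^ m * ‖x‖ := by
  obtain ⟨b, hb⟩ :=
    End.exists_basis_hasEigenvector_of_charpoly_eq_prod (A.charpoly_vecMulLinear.trans hchar) hlam
  have horth : ∀ j ≠ i₀, b j ⬝ᵥ ω = 0 := fun j hj =>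
    dotProduct_eq_zero_of_vecMul_eq_smul_of_mulVec_eq_smul (hb j).apply_eq_smul hev (hlam.ne hj)
  have hκ : b i₀ ⬝ᵥ ω ≠ 0 := fun h => hω <| dotProduct_eq_zero ω fun x => by
    rw [dotProduct_comm, b.dotProduct_eq_repr_mul horth, h, mul_zero]
  obtain ⟨B, hB₀, hB⟩ := End.exists_norm_pow_apply_le b hb hρ
  refine ⟨‖b i₀‖ / ‖b i₀ ⬝ᵥ ω‖, div_pos (norm_pos_iff.2 (b.ne_zero i₀)) (norm_pos_iff.2 hκ),
    B, hB₀, fun x m => ?_⟩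
  calc ‖x ᵥ* A ^ m‖ = ‖(A.vecMulLinear ^ m) x‖ := by rw [vecMulLinear_pow_apply]
    _ ≤ ‖b.repr x i₀‖ * ‖lam i₀‖ ^ m * ‖b i₀‖ + B * ρ ^ m * ‖x‖ := hB x m
    _ = _ := by
      rw [b.dotProduct_eq_repr_mul horth x, norm_mul]
      field_simp

namespace Renorm

lemma KochType.apply_zero_ne_zero {d : ℕ} {ω : Fin d → ℝ} (hω : KochType d ω)
    (hd : 0 < d) : ω ⟨0, hd⟩ ≠ 0 := by
  obtain ⟨c, ω₀, hc, rfl, hone, -⟩ := hω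
  simpa [hone hd] using hc

lemma abs_le_nZ {d : ℕ} (k : Fin d → ℤ) (i : Fin d) : |(k i : ℝ)| ≤ nZ k :=
  Finset.single_le_sum (f := fun i => |(k i : ℝ)|) (fun _ _ => abs_nonneg _) (Finset.mem_univ i)

lemma one_le_nZ {d : ℕ} {k : Fin d → ℤ} (hk : k ≠ 0) : 1 ≤ nZ k := by
  obtain ⟨i, hi⟩ := Function.ne_iff.1 hk
  calc (1 : ℝ) ≤ |(k i : ℝ)| := by
        rw [← Int.cast_abs]
        exact_mod_cast Int.one_le_abs hi
    _ ≤ nZ k := abs_le_nZ k i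

lemma norm_intCast_le_nZ {d : ℕ} (k : Fin d → ℤ) : ‖fun i => (k i : ℂ)‖ ≤ nZ k :=
  (pi_norm_le_iff_of_nonneg (by unfold nZ; positivity)).2 fun i => by
    rw [Complex.norm_intCast]
    exact abs_le_nZ k i

/-- Koch type vectors are diophantine with exponent
`β = -1 - ln|λ₁|/ln|λ₂|`. -/
theorem statement2 {d : ℕ} (hd : 2 ≤ d) (ω : Fin d → ℝ) (hKT : KochType d ω)
    (T : Matrix (Fin d) (Fin d) ℤ) (hdet : T.det = 1 ∨ T.det = -1)
    (lam : Fin d → ℂ)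
    (hchar : (T.map ((↑) : ℤ → ℂ)).charpoly = ∏ j, (Polynomial.X - Polynomial.C (lam j)))
    (hsimple : Function.Injective lam)
    (hmono : ∀ i j : Fin d, i ≤ j → ‖lam j‖ ≤ ‖lam i‖)
    (hpos : ∀ j, 0 < ‖lam j‖)
    (h2 : ‖lam ⟨1, by omega⟩‖ < 1)
    (h1 : 1 < ‖lam ⟨0, by omega⟩‖)
    (hev : (T.map ((↑) : ℤ → ℂ)).mulVec (fun i => (ω i : ℂ))
        = lam ⟨0, by omega⟩ • fun i => (ω i : ℂ))
    (β : ℝ)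
    (hβ : β = -1 - Real.log (‖lam ⟨0, by omega⟩‖)
        / Real.log (‖lam ⟨1, by omega⟩‖)) :
    ∃ C > 0, ∀ k : Fin d → ℤ, k ≠ 0 →
      C * nZ k ^ (-β - 1) < |∑ i, ω i * (k i : ℝ)| := by
  set i₀ : Fin d := ⟨0, by omega⟩
  set i₁ : Fin d := ⟨1, by omega⟩
  set ωc : Fin d → ℂ := fun i => (ω i : ℂ)
  have hωc : ωc ≠ 0 := fun h =>
    hKT.apply_zero_ne_zero (by omega) (Complex.ofReal_eq_zero.1 (congrFun h i₀))
  have hρ : ∀ j ≠ i₀, ‖lam j‖ ≤ ‖lam i₁‖ := fun j hj => hmono i₁ j <| by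
    rw [Fin.le_def]
    have := Fin.val_ne_of_ne hj
    simp only [i₀, i₁] at this ⊢
    omega
  obtain ⟨a, ha, B, hB, hgrowth⟩ := exists_norm_vecMul_pow_le hchar hsimple hωc hev hρ
  obtain ⟨C, hC, hCE⟩ := exists_pos_forall_mul_rpow_lt_of_one_le_add_pow (B := B) h1 (hpos i₁) h2 ha
  have hdet : T.det ≠ 0 := by rcases hdet with h | h <;> simp [h]
  refine ⟨C, hC, fun k hk => ?_⟩
  set kc : Fin d → ℂ := fun i => (k i : ℂ)
  have hE : |∑ i, ω i * (k i : ℝ)| = ‖kc ⬝ᵥ ωc‖ := by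
    rw [dotProduct_comm, ← Real.norm_eq_abs, ← Complex.norm_real]
    push_cast
    rfl
  rw [show -β - 1 = Real.log ‖lam i₀‖ / Real.log ‖lam i₁‖ by rw [hβ]; ring, hE]
  refine hCE _ _ (one_le_nZ hk) fun m => ?_
  calc 1 ≤ ‖kc ᵥ* T.map ((↑) : ℤ → ℂ) ^ m‖ := one_le_norm_intCast_vecMul_map_pow hdet hk m
    _ ≤ a * ‖lam i₀‖ ^ m * ‖kc ⬝ᵥ ωc‖ + B * ‖lam i₁‖ ^ m * ‖kc‖ := hgrowth kc m
    _ ≤ _ := by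
      gcongr
      exact norm_intCast_le_nZ k

end Renorm
end
end

section
/- Let d ≥ 2, 0 < κ < 1, 0 < ρ' < ρ with κρ < ρ'. Let ω ∈ KT_d, T ∈ GL(d,ℤ) with Tω = λ₁ω (λ₁ the unique eigenvalue of T of modulus greater than 1), and ω̄ ∈ ℝ^d with Tᵀω̄ = λ₁ω̄ and ω̄·ω = 1. Let σ > 0 be such that every nonzero k ∈ ℤ^d with |ω·k| ≤ σ‖k‖ satisfies ‖Tᵀk‖ ≤ κ‖k‖, so that 𝒯 : X ↦ T⁻¹·(X∘T) is a bounded linear map from 𝕀_σ⁺(ω)𝒜_d(ρ') to 𝒜'_d(ρ). Let 𝒰 be any analytic map from an open ball B̂ ⊂ 𝒜'_d(ρ) centred at the constant vector field ω into 𝕀_σ⁺(ω)𝒜_d(ρ') satisfying ‖𝒰(ω+f) − ω − 𝕀_σ⁺(ω)f‖_{ρ'} = O(‖f‖'_ρ²) for ω+f ∈ B̂. Then there is an open ball B ⊆ B̂ centred at ω such that for every X ∈ B the complex number ω̄·𝔼(𝒯(𝒰(X))) is nonzero, and the renormalisation operator ℛ(X) = 𝒯(𝒰(X)) / (ω̄·𝔼(𝒯(𝒰(X))))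 is a well-defined analytic map from B to 𝒜'_d(ρ). -/
/-!
At the centre `X = ω` the quadratic estimate for `𝒰` (with `f = 0`) gives `𝒰(ω) = ω`, and `𝒯`
maps the constant field `ω` to the constant field `T⁻¹ω = λ₁⁻¹ω`; hence the normalising factor
`ω̄·𝔼(𝒯(𝒰(X)))` equals `λ₁⁻¹ ≠ 0` there, since `ω̄·ω = 1`. The factor depends analytically on `X`,
so it stays nonzero on a small ball, where `ℛ` is the product of two analytic maps.

`𝒰` is only assumed analytic as a map into the ambient space; it is analytic into the subspace of
modes in `I_σ⁺(ω)`, where `𝒯` is defined, because truncating the Fourier series is a continuous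
projection onto that subspace.
-/

open scoped BigOperators ENNReal Classical
open Complex

noncomputable section

namespace lp

variable {α 𝕜 : Type*} {E : α → Type*} {p : ℝ≥0∞} [Fact (1 ≤ p)] [NormedField 𝕜]
  [∀ i, NormedAddCommGroup (E i)] [∀ i, NormedSpace 𝕜 (E i)]

def restrict (S : Set α) : lp E p →L[𝕜] lp E p :=
  LinearMap.mkContinuous
    { toFun := fun x =>
        ⟨fun i => if i ∈ S then x i else 0,
          (lp.memℓp x).mono' fun i => by split_ifs <;> simp⟩
      map_add' := fun x y => by ext i; simp only [coeFn_add, Pi.add_apply]; split_ifs <;> simp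
      map_smul' := fun c x => by ext i; simp only [coeFn_smul, Pi.smul_apply]; split_ifs <;> simp }
    1 fun x => by
      rw [one_mul]
      exact lp.norm_mono (zero_lt_one.trans_le (Fact.out : 1 ≤ p)).ne' fun i => by
        dsimp only [LinearMap.coe_mk, AddHom.coe_mk]
        split_ifs <;> simp

theorem restrict_apply (S : Set α) (x : lp E p) (i : α) :
    (restrict (𝕜 := 𝕜) S x) i = if i ∈ S then x i else 0 := rfl

end lp

theorem Submodule.ClosedComplemented.analyticOnNhd_of_coe {𝕜 E G : Type*}
    [NontriviallyNormedField 𝕜] [NormedAddCommGroup E] [NormedSpace 𝕜 E]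
    [NormedAddCommGroup G] [NormedSpace 𝕜 G] {p : Submodule 𝕜 E} (hp : p.ClosedComplemented)
    {f : G → p} {s : Set G} (hf : AnalyticOnNhd 𝕜 (fun x => (f x : E)) s) :
    AnalyticOnNhd 𝕜 f s := by
  obtain ⟨P, hP⟩ := hp
  have hfP : f = P ∘ fun x => (f x : E) := funext fun x => (hP (f x)).symm
  rw [hfP]
  exact P.comp_analyticOnNhd hf

theorem exists_ball_analyticOnNhd_inv_smul {𝕜 E F : Type*} [NontriviallyNormedField 𝕜]
    [NormedAddCommGroup E] [NormedSpace 𝕜 E] [NormedAddCommGroup F] [NormedSpace 𝕜 F]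
    [CompleteSpace 𝕜] {φ : E → 𝕜} {g : E → F} {c : E} {r : ℝ} (hr : 0 < r)
    (hφ : AnalyticOnNhd 𝕜 φ (Metric.ball c r)) (hg : AnalyticOnNhd 𝕜 g (Metric.ball c r))
    (hc : φ c ≠ 0) :
    ∃ ε > (0 : ℝ), ε ≤ r ∧ (∀ x ∈ Metric.ball c ε, φ x ≠ 0) ∧
      AnalyticOnNhd 𝕜 (fun x => (φ x)⁻¹ • g x) (Metric.ball c ε) := by
  obtain ⟨δ, hδ, hne⟩ := Metric.eventually_nhds_iff_ball.mp
    ((hφ c (Metric.mem_ball_self hr)).continuousAt.eventually_ne hc)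
  have hsub : Metric.ball c (min δ r) ⊆ Metric.ball c r :=
    Metric.ball_subset_ball (min_le_right _ _)
  have hne' : ∀ x ∈ Metric.ball c (min δ r), φ x ≠ 0 :=
    fun x hx => hne x (Metric.ball_subset_ball (min_le_left _ _) hx)
  exact ⟨min δ r, lt_min hδ hr, min_le_right _ _, hne',
    ((hφ.mono hsub).inv hne').smul (hg.mono hsub)⟩

theorem Matrix.smul_inv_mulVec_of_mulVec_eq_smul {n R : Type*} [Fintype n] [DecidableEq n]
    [CommRing R] {A : Matrix n n R} (hA : IsUnit A.det) {v : n → R} {l : R}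
    (hv : A.mulVec v = l • v) : l • A⁻¹.mulVec v = v := by
  rw [← Matrix.mulVec_smul, ← hv, Matrix.mulVec_mulVec, Matrix.nonsing_inv_mul _ hA,
    Matrix.one_mulVec]

namespace Renorm

variable {d m : ℕ}

theorem closedComplemented_subOn (S : Set (Fin d → ℤ)) : (SubOn d m S).ClosedComplemented := by
  refine ⟨(lp.restrict S).codRestrict _ fun x i hi => by simp [lp.restrict_apply, hi],
    fun x => Subtype.ext (lp.ext (funext fun i => ?_))⟩
  show (if i ∈ S then (x : AA d m) i else 0) = _
  split_ifs with hi
  · rfl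
  · exact (x.2 i hi).symm

@[simp] theorem coeffA_zero (r : ℝ) (a : AA d m) : coeffA r a 0 = a 0 := by
  simp [coeffA, w, nZ]

@[simp] theorem coeffA'_zero (r : ℝ) (a : AA d m) : coeffA' r a 0 = a 0 := by
  simp [coeffA', w', nZ]

@[simp] theorem const_apply_zero (c : V m) : (const c : AA d m) 0 = c := by
  simp [const]

/-- the renormalisation operator `ℛ(X) = 𝒯(𝒰(X)) / (ω̄·𝔼(𝒯(𝒰(X))))`
is well defined and analytic on an open ball `B ⊆ B̂` centred at `ω`. -/
theorem statement4 {d : ℕ} (ρ ρ' σ : ℝ)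
    (ω : Fin d → ℝ)
    (T : Matrix (Fin d) (Fin d) ℤ) (hdet : T.det = 1 ∨ T.det = -1)
    (l1 : ℝ)
    (hev : (T.map ((↑) : ℤ → ℝ)).mulVec ω = l1 • ω)
    (ωbar : Fin d → ℝ)
    (hnorm : ∑ i, ωbar i * ω i = 1)
    (𝒯 : ↥(SubOn d d (Iminus σ (toC ω))ᶜ) →L[ℂ] AA d d)
    (h𝒯 : ∀ (X : ↥(SubOn d d (Iminus σ (toC ω))ᶜ)) (k : Fin d → ℤ),
        coeffA' ρ (𝒯 X) (T.transpose.mulVec k)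
          = (WithLp.toLp 1 ((T.map ((↑) : ℤ → ℂ))⁻¹.mulVec (coeffA ρ' (X : AA d d) k)) : V d))
    (εhat : ℝ) (hεhat : 0 < εhat)
    (𝒰 : AA d d → ↥(SubOn d d (Iminus σ (toC ω))ᶜ))
    (hUan : AnalyticOnNhd ℂ (fun X => ((𝒰 X : AA d d)))
        (Metric.ball (const (toC ω)) εhat))
    (hUest : ∃ Cst : ℝ, ∀ f g : AA d d,
        const (toC ω) + f ∈ Metric.ball (const (toC ω) : AA d d) εhat →
        (∀ k, coeffA ρ' g k = if k ∈ Iminus σ (toC ω) then 0 else coeffA' ρ f k) →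
        ‖((𝒰 (const (toC ω) + f) : AA d d)) - const (toC ω) - g‖ ≤ Cst * ‖f‖ ^ 2) :
    ∃ ε > (0 : ℝ), ε ≤ εhat ∧
      (∀ X ∈ Metric.ball (const (toC ω) : AA d d) ε,
        (∑ i, (ωbar i : ℂ) * (𝒯 (𝒰 X)) 0 i) ≠ 0) ∧
      AnalyticOnNhd ℂ
        (fun X => (∑ i, (ωbar i : ℂ) * (𝒯 (𝒰 X)) 0 i)⁻¹ • (𝒯 (𝒰 X)))
        (Metric.ball (const (toC ω)) ε) := by
  set c : AA d d := const (toC ω)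
  obtain ⟨C, hC⟩ := hUest
  have hfix : (𝒰 c : AA d d) = c := by
    have hc : c + 0 ∈ Metric.ball c εhat := by simpa using Metric.mem_ball_self (x := c) hεhat
    simpa [sub_eq_zero] using hC 0 0 hc (by simp [coeffA, coeffA'])
  have hdetC : IsUnit (T.map ((↑) : ℤ → ℂ)).det := by
    rw [show (T.map ((↑) : ℤ → ℂ)).det = (T.det : ℂ) from ((Int.castRingHom ℂ).map_det T).symm]
    rcases hdet with h | h <;> simp [h]
  have hevC : (T.map ((↑) : ℤ → ℂ)).mulVec (toC ω) = (l1 : ℂ) • (toC ω : Fin d → ℂ) := by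
    ext i
    have := congrArg (fun v => ((v i : ℝ) : ℂ)) hev
    simpa [Matrix.mulVec, dotProduct, toC] using this
  have hmean : (𝒯 (𝒰 c) : AA d d) 0 = WithLp.toLp 1 ((T.map ((↑) : ℤ → ℂ))⁻¹.mulVec (toC ω)) := by
    simpa only [Matrix.mulVec_zero, coeffA'_zero, coeffA_zero, hfix, c, const_apply_zero] using
      h𝒯 (𝒰 c) 0
  have hφc : (l1 : ℂ) * ∑ i, (ωbar i : ℂ) * (𝒯 (𝒰 c)) 0 i = 1 := by
    rw [hmean, Finset.mul_sum]
    calc _ = ∑ i, (ωbar i : ℂ) * ((l1 : ℂ) • (T.map ((↑) : ℤ → ℂ))⁻¹.mulVec (toC ω)) i := by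
          simp only [Pi.smul_apply, smul_eq_mul]
          exact Finset.sum_congr rfl fun i _ => by ring
      _ = 1 := by
          rw [Matrix.smul_inv_mulVec_of_mulVec_eq_smul hdetC hevC]
          simpa [toC] using congrArg ((↑) : ℝ → ℂ) hnorm
  have hg : AnalyticOnNhd ℂ (fun X => (𝒯 (𝒰 X) : AA d d)) (Metric.ball c εhat) :=
    𝒯.comp_analyticOnNhd ((closedComplemented_subOn _).analyticOnNhd_of_coe hUan)
  have hφ : AnalyticOnNhd ℂ (fun X => ∑ i, (ωbar i : ℂ) * (𝒯 (𝒰 X)) 0 i) (Metric.ball c εhat) :=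
    Finset.analyticOnNhd_fun_sum _ fun i _ => analyticOnNhd_const.mul
      (((PiLp.proj (𝕜 := ℂ) 1 (fun _ : Fin d => ℂ) i).comp
        (lp.evalCLM ℂ (fun _ : Fin d → ℤ => V d) 1 0)).comp_analyticOnNhd hg :)
  exact exists_ball_analyticOnNhd_inv_smul hεhat hφ hg (right_ne_zero_of_mul_eq_one hφc)

end Renorm
end
end

section
/- Let d ≥ 2, T ∈ GL(d,ℤ), 0 < κ < 1 and 0 < ρ' < ρ with κρ < ρ'. Let X ∈ 𝒜_d(ρ') be such that every index k ∈ ℤ^d with X_k ≠ 0 satisfies ‖Tᵀk‖ ≤ κ‖k‖. Then X∘T, with Fourier series Σ_k X_k e^{2πi(Tᵀk)·θ}, belongs to 𝒜_d(ρ) and ‖X∘T‖_ρ ≤ ‖X‖_{ρ'}. Moreover, for every β with 0 < β < ρ' − κρ one has Σ_k 2π‖Tᵀk‖·‖X_k‖·e^{ρ‖Tᵀk‖} ≤ (2πκ/β)·‖X‖_{ρ'}, and consequently ‖T⁻¹·(X∘T)‖'_ρ ≤ (1 + 2πκ/β)·‖T⁻¹‖·‖X‖_{ρ'}, where ‖T⁻¹‖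 is the operator norm of T⁻¹ with respect to the ℓ¹-norm. -/
open scoped BigOperators ENNReal Classical
open Complex

noncomputable section

namespace Renorm

/-! On the support of `X` we have `‖Tᵀk‖ ≤ κ‖k‖`, so `e^{ρ‖Tᵀk‖} ≤ e^{κρ‖k‖} ≤ e^{-β‖k‖} e^{ρ'‖k‖}`.
Dropping `e^{-β‖k‖}` gives `‖X ∘ T‖_ρ ≤ ‖X‖_{ρ'}`; keeping it, it absorbs the derivative weight
`2π‖Tᵀk‖ ≤ 2πκ‖k‖` because `t e^{-βt} ≤ 1/β`. Since `Tᵀ` is injective on `ℤ^d`, the transported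
coefficients form an `ℓ¹` family again. -/

section LpOne

variable {ι ι' E F : Type*} [NormedAddCommGroup E] [NormedAddCommGroup F]

lemma lp_one_norm_eq_tsum (x : lp (fun _ : ι => E) 1) : ‖x‖ = ∑' k, ‖x k‖ := by
  rw [lp.norm_eq_tsum_rpow (by norm_num)]
  simp

lemma lp_one_summable_norm (x : lp (fun _ : ι => E) 1) : Summable fun k => ‖x k‖ := by
  simpa using (lp.memℓp x).summable (p := 1) (by norm_num)

lemma tsum_le_mul_lp_one_norm (x : lp (fun _ : ι => E) 1) {c : ℝ} {g : ι → ℝ}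
    (hg0 : ∀ k, 0 ≤ g k) (hg : ∀ k, g k ≤ c * ‖x k‖) : ∑' k, g k ≤ c * ‖x‖ := by
  have hsum : Summable fun k => c * ‖x k‖ := (lp_one_summable_norm x).mul_left c
  calc ∑' k, g k ≤ ∑' k, c * ‖x k‖ := (hsum.of_nonneg_of_le hg0 hg).tsum_le_tsum hg hsum
    _ = c * ‖x‖ := by rw [tsum_mul_left, lp_one_norm_eq_tsum]

lemma exists_lp_one_extend_of_norm_le {φ : ι → ι'} (hφ : φ.Injective)
    (x : lp (fun _ : ι => E) 1) {c : ℝ} {f : ι → F} (hf : ∀ k, ‖f k‖ ≤ c * ‖x k‖) :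
    ∃ y : lp (fun _ : ι' => F) 1, (∀ k, y (φ k) = f k) ∧ ‖y‖ ≤ c * ‖x‖ := by
  set g := Function.extend φ f 0
  have hnorm_g : (fun i => ‖g i‖) = Function.extend φ (fun k => ‖f k‖) 0 := by
    funext i
    rw [Function.apply_extend (fun v : F => ‖v‖)]
    simp only [Function.comp_def, Pi.zero_apply, norm_zero]
    rfl
  have hsum_f : Summable fun k => ‖f k‖ :=
    ((lp_one_summable_norm x).mul_left c).of_nonneg_of_le (fun _ => norm_nonneg _) hf
  have hsum_g : Summable fun i => ‖g i‖ := by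
    rwa [hnorm_g, summable_extend_zero hφ]
  have hmem : Memℓp g 1 := memℓp_gen (by simpa using hsum_g)
  refine ⟨⟨g, hmem⟩, fun k => hφ.extend_apply f 0 k, ?_⟩
  rw [lp_one_norm_eq_tsum]
  change ∑' i, ‖g i‖ ≤ c * ‖x‖
  rw [hnorm_g, tsum_extend_zero hφ]
  exact tsum_le_mul_lp_one_norm x (fun _ => norm_nonneg _) hf

end LpOne

lemma norm_toLp_mulVec_le {d : ℕ} (A : Matrix (Fin d) (Fin d) ℂ) (v : V d) :
    ‖(WithLp.toLp 1 (A.mulVec v) : V d)‖ ≤ (⨆ j, ∑ i, ‖A i j‖) * ‖v‖ := by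
  have hcol : ∀ j, ∑ i, ‖A i j‖ ≤ ⨆ j, ∑ i, ‖A i j‖ :=
    le_ciSup (Set.finite_range _).bddAbove
  simp only [PiLp.norm_eq_sum (p := 1) (by norm_num), ENNReal.toReal_one, Real.rpow_one,
    div_one]
  calc ∑ i, ‖A.mulVec v i‖
      ≤ ∑ i, ∑ j, ‖A i j‖ * ‖v j‖ := by
        gcongr with i
        simp only [Matrix.mulVec, dotProduct, ← norm_mul]
        exact norm_sum_le _ _
    _ = ∑ j, (∑ i, ‖A i j‖) * ‖v j‖ := by
        rw [Finset.sum_comm]; simp only [Finset.sum_mul]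
    _ ≤ ∑ j, (⨆ j, ∑ i, ‖A i j‖) * ‖v j‖ := by
        gcongr with j; exact hcol j
    _ = (⨆ j, ∑ i, ‖A i j‖) * ∑ j, ‖v j‖ := (Finset.mul_sum _ _ _).symm

lemma nZ_nonneg {d : ℕ} (k : Fin d → ℤ) : 0 ≤ nZ k :=
  Finset.sum_nonneg fun _ _ => abs_nonneg _

lemma w_pos {d : ℕ} (r : ℝ) (k : Fin d → ℤ) : 0 < w r k := Real.exp_pos _

lemma w'_eq_w_add {d : ℕ} (r : ℝ) (k : Fin d → ℤ) :
    w' r k = w r k + 2 * Real.pi * nZ k * Real.exp (r * nZ k) := by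
  rw [w', w]; ring

lemma w'_pos {d : ℕ} (r : ℝ) (k : Fin d → ℤ) : 0 < w' r k := by
  rw [w'_eq_w_add]
  have := nZ_nonneg k
  have := w_pos r k
  positivity

lemma norm_coeffA {d m : ℕ} (r : ℝ) (a : AA d m) (k : Fin d → ℤ) :
    ‖coeffA r a k‖ = (w r k)⁻¹ * ‖a k‖ := by
  rw [coeffA, norm_smul, Real.norm_of_nonneg (inv_nonneg.mpr (w_pos r k).le)]

lemma exp_mul_le_exp_mul_of_le_mul {κ ρ ρ' a b : ℝ} (hρ : 0 ≤ ρ) (hκρ : κ * ρ ≤ ρ')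
    (hb : 0 ≤ b) (hab : a ≤ κ * b) : Real.exp (ρ * a) ≤ Real.exp (ρ' * b) :=
  Real.exp_le_exp.mpr <| calc
    ρ * a ≤ ρ * (κ * b) := mul_le_mul_of_nonneg_left hab hρ
    _ = (κ * ρ) * b := by ring
    _ ≤ ρ' * b := mul_le_mul_of_nonneg_right hκρ hb

lemma mul_exp_neg_mul_le_inv {β : ℝ} (hβ : 0 < β) (t : ℝ) : t * Real.exp (-(β * t)) ≤ β⁻¹ := by
  rw [Real.exp_neg, ← div_eq_mul_inv, div_le_iff₀ (Real.exp_pos _), ← div_eq_inv_mul,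
    le_div_iff₀ hβ, mul_comm]
  linarith [Real.add_one_le_exp (β * t)]

lemma mul_exp_mul_le_div_mul_exp {β κ ρ ρ' a b : ℝ} (hβ : 0 < β) (hκ : 0 ≤ κ) (hρ : 0 ≤ ρ)
    (hβκρ : β ≤ ρ' - κ * ρ) (hb : 0 ≤ b) (hab : a ≤ κ * b) :
    a * Real.exp (ρ * a) ≤ κ / β * Real.exp (ρ' * b) := by
  have hexp : Real.exp (ρ * a) ≤ Real.exp ((ρ' - β) * b) :=
    exp_mul_le_exp_mul_of_le_mul hρ (by linarith) hb hab
  calc a * Real.exp (ρ * a) ≤ κ * b * Real.exp ((ρ' - β) * b) :=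
        mul_le_mul hab hexp (Real.exp_pos _).le (mul_nonneg hκ hb)
    _ = κ * (b * Real.exp (-(β * b))) * Real.exp (ρ' * b) := by
        rw [mul_assoc κ b, mul_assoc κ, mul_assoc b, ← Real.exp_add]; ring_nf
    _ ≤ κ * β⁻¹ * Real.exp (ρ' * b) := by
        gcongr; exact mul_exp_neg_mul_le_inv hβ b
    _ = κ / β * Real.exp (ρ' * b) := by ring

section Contraction

variable {d m : ℕ} {κ ρ ρ' β : ℝ} {φ : (Fin d → ℤ) → (Fin d → ℤ)} {X : AA d m}

lemma w_mul_norm_coeffA_le (hρ : 0 ≤ ρ) (hκρ : κ * ρ ≤ ρ')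
    (hsupp : ∀ k, X k ≠ 0 → nZ (φ k) ≤ κ * nZ k) (k : Fin d → ℤ) :
    w ρ (φ k) * ‖coeffA ρ' X k‖ ≤ ‖X k‖ := by
  rw [norm_coeffA, ← mul_assoc]
  by_cases hk : X k = 0
  · simp [hk]
  have hw : w ρ (φ k) ≤ w ρ' k :=
    exp_mul_le_exp_mul_of_le_mul hρ hκρ (nZ_nonneg k) (hsupp k hk)
  refine mul_le_of_le_one_left (norm_nonneg _) ?_
  rwa [← div_eq_mul_inv, div_le_one (w_pos ρ' k)]

lemma two_pi_mul_nZ_mul_norm_coeffA_le (hβ : 0 < β) (hκ : 0 ≤ κ) (hρ : 0 ≤ ρ)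
    (hβκρ : β ≤ ρ' - κ * ρ) (hsupp : ∀ k, X k ≠ 0 → nZ (φ k) ≤ κ * nZ k) (k : Fin d → ℤ) :
    2 * Real.pi * nZ (φ k) * ‖coeffA ρ' X k‖ * Real.exp (ρ * nZ (φ k))
      ≤ 2 * Real.pi * κ / β * ‖X k‖ := by
  by_cases hk : X k = 0
  · simp [hk, coeffA]
  have hkey := mul_exp_mul_le_div_mul_exp hβ hκ hρ hβκρ (nZ_nonneg k) (hsupp k hk)
  have hw := w_pos ρ' k
  rw [norm_coeffA]
  calc 2 * Real.pi * nZ (φ k) * ((w ρ' k)⁻¹ * ‖X k‖) * Real.exp (ρ * nZ (φ k))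
      = 2 * Real.pi * (nZ (φ k) * Real.exp (ρ * nZ (φ k))) * (w ρ' k)⁻¹ * ‖X k‖ := by ring
    _ ≤ 2 * Real.pi * (κ / β * w ρ' k) * (w ρ' k)⁻¹ * ‖X k‖ := by
        have := Real.pi_pos
        gcongr 2 * Real.pi * ?_ * _ * _
        exact hkey
    _ = 2 * Real.pi * κ / β * ‖X k‖ := by field_simp

lemma w'_mul_norm_coeffA_le (hβ : 0 < β) (hκ : 0 ≤ κ) (hρ : 0 ≤ ρ)
    (hβκρ : β ≤ ρ' - κ * ρ) (hsupp : ∀ k, X k ≠ 0 → nZ (φ k) ≤ κ * nZ k) (k : Fin d → ℤ) :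
    w' ρ (φ k) * ‖coeffA ρ' X k‖ ≤ (1 + 2 * Real.pi * κ / β) * ‖X k‖ := by
  have h₁ := w_mul_norm_coeffA_le hρ (by linarith) hsupp k
  have h₂ := two_pi_mul_nZ_mul_norm_coeffA_le hβ hκ hρ hβκρ hsupp k
  rw [w'_eq_w_add]
  linarith

lemma norm_w'_smul_toLp_mulVec_coeffA_le (A : Matrix (Fin m) (Fin m) ℂ) (hβ : 0 < β)
    (hκ : 0 ≤ κ) (hρ : 0 ≤ ρ) (hβκρ : β ≤ ρ' - κ * ρ)
    (hsupp : ∀ k, X k ≠ 0 → nZ (φ k) ≤ κ * nZ k) (k : Fin d → ℤ) :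
    ‖w' ρ (φ k) • (WithLp.toLp 1 (A.mulVec (coeffA ρ' X k)) : V m)‖
      ≤ (1 + 2 * Real.pi * κ / β) * (⨆ j, ∑ i, ‖A i j‖) * ‖X k‖ := by
  set M := ⨆ j, ∑ i, ‖A i j‖
  have hM : 0 ≤ M := Real.iSup_nonneg fun _ => by positivity
  rw [norm_smul, Real.norm_of_nonneg (w'_pos _ _).le]
  calc w' ρ (φ k) * ‖(WithLp.toLp 1 (A.mulVec (coeffA ρ' X k)) : V m)‖
      ≤ w' ρ (φ k) * (M * ‖coeffA ρ' X k‖) := by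
        gcongr
        · exact (w'_pos _ _).le
        · exact norm_toLp_mulVec_le A _
    _ = M * (w' ρ (φ k) * ‖coeffA ρ' X k‖) := by ring
    _ ≤ M * ((1 + 2 * Real.pi * κ / β) * ‖X k‖) := by
        gcongr M * ?_; exact w'_mul_norm_coeffA_le hβ hκ hρ hβκρ hsupp k
    _ = (1 + 2 * Real.pi * κ / β) * M * ‖X k‖ := by ring

end Contraction

theorem statement15_general {d : ℕ} (T : Matrix (Fin d) (Fin d) ℤ)
    (hdet : T.det = 1 ∨ T.det = -1) (κ ρ ρ' : ℝ) (hκ0 : 0 < κ)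
    (hρ' : 0 < ρ') (hρ : ρ' < ρ) (hκρ : κ * ρ < ρ')
    (X : AA d d)
    (hsupp : ∀ k, X k ≠ 0 → nZ (T.transpose.mulVec k) ≤ κ * nZ k) :
    (∃ Y : AA d d,
      (∀ k, coeffA ρ Y (T.transpose.mulVec k) = coeffA ρ' X k) ∧ ‖Y‖ ≤ ‖X‖) ∧
    ∀ β : ℝ, 0 < β → β < ρ' - κ * ρ →
      (∑' k : Fin d → ℤ, 2 * Real.pi * nZ (T.transpose.mulVec k) * ‖coeffA ρ' X k‖
          * Real.exp (ρ * nZ (T.transpose.mulVec k))) ≤ 2 * Real.pi * κ / β * ‖X‖ ∧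
      ∃ Z : AA d d,
        (∀ k, coeffA' ρ Z (T.transpose.mulVec k)
            = (WithLp.toLp 1 ((T.map ((↑) : ℤ → ℂ))⁻¹.mulVec (coeffA ρ' X k)) : V d)) ∧
        ‖Z‖ ≤ (1 + 2 * Real.pi * κ / β)
            * (⨆ j : Fin d, ∑ i, ‖(T.map ((↑) : ℤ → ℂ))⁻¹ i j‖) * ‖X‖ := by
  have hρ0 : 0 ≤ ρ := (hρ'.trans hρ).le
  have hinj : Function.Injective T.transpose.mulVec := Matrix.mulVec_injective_of_isUnit <| by
    rw [Matrix.isUnit_iff_isUnit_det, Matrix.det_transpose, Int.isUnit_iff]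
    exact hdet
  refine ⟨?_, fun β hβ hβκρ => ⟨?_, ?_⟩⟩
  · obtain ⟨Y, hYφ, hY⟩ := exists_lp_one_extend_of_norm_le hinj X (c := 1)
      (f := fun k => w ρ (T.transpose.mulVec k) • coeffA ρ' X k) fun k => by
        rw [norm_smul, Real.norm_of_nonneg (w_pos _ _).le, one_mul]
        exact w_mul_norm_coeffA_le hρ0 hκρ.le hsupp k
    refine ⟨Y, fun k => ?_, by simpa using hY⟩
    rw [coeffA, hYφ, inv_smul_smul₀ (w_pos _ _).ne']
  · refine tsum_le_mul_lp_one_norm X (fun k => ?_)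
      (two_pi_mul_nZ_mul_norm_coeffA_le hβ hκ0.le hρ0 hβκρ.le hsupp)
    have := nZ_nonneg (T.transpose.mulVec k)
    positivity
  · obtain ⟨Z, hZφ, hZ⟩ := exists_lp_one_extend_of_norm_le hinj X
      (norm_w'_smul_toLp_mulVec_coeffA_le _ hβ hκ0.le hρ0 hβκρ.le hsupp)
    refine ⟨Z, fun k => ?_, hZ⟩
    rw [coeffA', hZφ, inv_smul_smul₀ (w'_pos _ _).ne']

/-- analyticity improvement estimates for the change of basis `X ↦ T⁻¹·(X∘T)`. -/
theorem statement15 {d : ℕ} (hd : 2 ≤ d) (T : Matrix (Fin d) (Fin d) ℤ)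
    (hdet : T.det = 1 ∨ T.det = -1) (κ ρ ρ' : ℝ) (hκ0 : 0 < κ) (hκ1 : κ < 1)
    (hρ' : 0 < ρ') (hρ : ρ' < ρ) (hκρ : κ * ρ < ρ')
    (X : AA d d)
    (hsupp : ∀ k, X k ≠ 0 → nZ (T.transpose.mulVec k) ≤ κ * nZ k) :
    (∃ Y : AA d d,
      (∀ k, coeffA ρ Y (T.transpose.mulVec k) = coeffA ρ' X k) ∧ ‖Y‖ ≤ ‖X‖) ∧
    ∀ β : ℝ, 0 < β → β < ρ' - κ * ρ →
      (∑' k : Fin d → ℤ, 2 * Real.pi * nZ (T.transpose.mulVec k) * ‖coeffA ρ' X k‖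
          * Real.exp (ρ * nZ (T.transpose.mulVec k))) ≤ 2 * Real.pi * κ / β * ‖X‖ ∧
      ∃ Z : AA d d,
        (∀ k, coeffA' ρ Z (T.transpose.mulVec k)
            = (WithLp.toLp 1 ((T.map ((↑) : ℤ → ℂ))⁻¹.mulVec (coeffA ρ' X k)) : V d)) ∧
        ‖Z‖ ≤ (1 + 2 * Real.pi * κ / β)
            * (⨆ j : Fin d, ∑ i, ‖(T.map ((↑) : ℤ → ℂ))⁻¹ i j‖) * ‖X‖ :=
  statement15_general T hdet κ ρ ρ' hκ0 hρ' hρ hκρ X hsupp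

end Renorm
end
end
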